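/- arXiv:2508.14731 — 6 statements merged into one kernel-verified Lean document; each statement's English description precedes it below -/
import Mathlib

section
/- Let P(t) = c_q t^q + ... + c_1 t + c_0 be a non-constant polynomial with integer coefficients, and suppose there exists a prime number p such that p does not divide c_0 but p divides c_i for every 1 ≤ i ≤ q. Then no complex root of P is an algebraic integer. -/
/-!
Since `p` divides every coefficient of positive degree, `P = c₀ + p · X · R` for some `R ∈ ℤ[X]`.
At an integral root `t₀` this gives `p · (t₀ R(t₀)) = -c₀`, where `t₀ R(t₀)` is again an algebraic
integer. So the rational number `-c₀ / p` is an algebraic integer, hence an integer, i.e. `p ∣ c₀`.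
-/

open Polynomial

theorem Polynomial.C_dvd_divX_of_dvd_coeff {R : Type*} [CommSemiring R] {P : R[X]} {p : R}
    (hi : ∀ i : ℕ, 1 ≤ i → i ≤ P.natDegree → p ∣ P.coeff i) : C p ∣ P.divX := by
  rw [C_dvd_iff_dvd_coeff]
  intro i
  rw [coeff_divX]
  by_cases h : i + 1 ≤ P.natDegree
  · exact hi (i + 1) (by omega) h
  · rw [coeff_eq_zero_of_natDegree_lt (by omega)]
    exact dvd_zero p

theorem IsIntegrallyClosed.dvd_of_mul_eq_algebraMap {R K L : Type*} [CommRing R] [IsDomain R]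
    [IsIntegrallyClosed R] [Field K] [Algebra R K] [IsFractionRing R K] [Field L] [Algebra R L]
    [Algebra K L] [IsScalarTower R K L] {p a : R} {x : L} (hx : IsIntegral R x)
    (h : algebraMap R L p * x = algebraMap R L a) : p ∣ a := by
  have hinj : Function.Injective (algebraMap R K) := IsFractionRing.injective R K
  simp only [IsScalarTower.algebraMap_apply R K L] at h
  by_cases hp : p = 0
  · subst hp
    have ha : algebraMap R K a = 0 := by simpa using h.symm
    simp [(map_eq_zero_iff _ hinj).mp ha]
  have hpK : algebraMap R K p ≠ 0 := (map_ne_zero_iff _ hinj).mpr hp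
  have hx_eq : algebraMap K L (algebraMap R K a / algebraMap R K p) = x := by
    rw [map_div₀, ← h, mul_div_cancel_left₀ x ((_root_.map_ne_zero _).mpr hpK)]
  obtain ⟨r, hr⟩ := IsIntegrallyClosed.isIntegral_iff.mp
    ((isIntegral_algebraMap_iff (algebraMap K L).injective).mp (hx_eq ▸ hx))
  refine ⟨r, hinj ?_⟩
  rw [map_mul, hr]
  field_simp

theorem no_root_is_algebraic_integer_general (P : Polynomial ℤ)
    (p : ℕ)
    (h0 : ¬ (p : ℤ) ∣ P.coeff 0)
    (hi : ∀ i : ℕ, 1 ≤ i → i ≤ P.natDegree → (p : ℤ) ∣ P.coeff i)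
    (t₀ : ℂ) (ht₀ : Polynomial.aeval t₀ P = 0) :
    ¬ IsIntegral ℤ t₀ := by
  intro ht₀_int
  obtain ⟨R, hR⟩ := C_dvd_divX_of_dvd_coeff hi
  have hroot : (p : ℂ) * (t₀ * aeval t₀ R) + (P.coeff 0 : ℂ) = 0 := by
    have h := congrArg (aeval t₀) (X_mul_divX_add P)
    rw [hR, ht₀] at h
    simp only [map_natCast, eq_intCast, map_add, map_mul, aeval_X, map_intCast] at h
    linear_combination h
  have hR_int : IsIntegral ℤ (t₀ * aeval t₀ R) :=
    ht₀_int.mul (adjoin_le_integralClosure ht₀_int (aeval_mem_adjoin_singleton ℤ t₀))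
  refine h0 (dvd_neg.mp (IsIntegrallyClosed.dvd_of_mul_eq_algebraMap (K := ℚ) hR_int ?_))
  simp only [algebraMap_int_eq, eq_intCast, Int.cast_natCast, Int.cast_neg]
  linear_combination hroot

/-- If `P(t) = c_q t^q + ⋯ + c_1 t + c_0 ∈ ℤ[t]` is non-constant and there is a prime `p`
with `p ∤ c_0` and `p ∣ c_i` for all `1 ≤ i ≤ q`, then no complex root of `P` is an
algebraic integer. -/
theorem no_root_is_algebraic_integer (P : Polynomial ℤ) (hP : 0 < P.natDegree)
    (p : ℕ) (hp : p.Prime)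
    (h0 : ¬ (p : ℤ) ∣ P.coeff 0)
    (hi : ∀ i : ℕ, 1 ≤ i → i ≤ P.natDegree → (p : ℤ) ∣ P.coeff i)
    (t₀ : ℂ) (ht₀ : Polynomial.aeval t₀ P = 0) :
    ¬ IsIntegral ℤ t₀ :=
  no_root_is_algebraic_integer_general P p h0 hi t₀ ht₀
end

section
/- Let V = [[e, f], [g, h]] be a 2×2 complex matrix with eh − fg = 1 and set v = tr V. Then for every natural number l, det( Σ_{i=0}^{l} AdM(V)^i ) = (l+1) · S_l(v)². -/
/-!
Over `ℂ`, `V` is conjugate to an upper triangular `T` with diagonal `λ, λ⁻¹`, where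
`λ + λ⁻¹ = tr V`. Since `adM` is multiplicative, the determinant is unchanged on replacing `V`
by `T`, and `adM T` is upper triangular with diagonal `λ², 1, λ⁻²`. Hence the determinant is
`(∑ λ^{2i}) (l + 1) (∑ λ^{-2i})`, and `S_l(λ + λ⁻¹) = ∑_{i ≤ l} λ^i λ^{-(l-i)}` equals both
`λ^{-l} ∑ λ^{2i}` and `λ^l ∑ λ^{-2i}`.
-/

open Polynomial

/-- Integer-indexed Chebyshev-like polynomials: `S 0 = 1`, `S 1 = X`,
and `S (l+1) = X * S l - S (l-1)` for all `l : ℤ`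
(equivalently `S l = U_l (v/2)` for the Chebyshev polynomials `U` of the second kind). -/
@[semireducible] noncomputable def chebS (R : Type*) [CommRing R] : ℤ → R[X]
  | 0 => 1
  | 1 => X
  | (n : ℕ) + 2 => X * chebS R (n + 1) - chebS R n
  | -((n : ℕ) + 1) => X * chebS R (-n) - chebS R (-n + 1)
  termination_by n => Int.natAbs n + Int.natAbs (n - 1)

open Finset

theorem chebS_eq_chebyshev_S (R : Type*) [CommRing R] : chebS R = Chebyshev.S R := by
  funext n
  induction n using Chebyshev.induct with
  | zero => simp [chebS]
  | one => simp [chebS]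
  | add_two n ih1 ih2 =>
    rw [Chebyshev.S_add_two, ← ih1, ← ih2]
    exact chebS.eq_3 R n
  | neg_add_one n ih1 ih2 =>
    rw [Chebyshev.S_sub_one, ← ih1, ← ih2, sub_eq_add_neg, ← neg_add]
    exact chebS.eq_4 R n

section

variable {R : Type*} [CommRing R]

theorem geom_sum₂_add_two (x y : R) (n : ℕ) :
    ∑ i ∈ range (n + 3), x ^ i * y ^ (n + 2 - i) =
      (x + y) * ∑ i ∈ range (n + 2), x ^ i * y ^ (n + 1 - i)
        - x * y * ∑ i ∈ range (n + 1), x ^ i * y ^ (n - i) := by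
  have h2 := geom_sum₂_succ_eq x y (n := n + 2)
  have h1 := geom_sum₂_succ_eq x y (n := n + 1)
  simp only [show n + 2 - 1 = n + 1 from rfl, Nat.add_sub_cancel] at h1 h2
  linear_combination h2 - x * h1

theorem geom_sum₂_eq_pow_mul_geom_sum_sq {x y : R} (hxy : x * y = 1) (n : ℕ) :
    ∑ i ∈ range (n + 1), x ^ i * y ^ (n - i) = y ^ n * ∑ i ∈ range (n + 1), (x ^ 2) ^ i := by
  rw [mul_sum]
  refine sum_congr rfl fun i hi => ?_
  rw [← pow_sub_mul_pow y (Nat.le_of_lt_succ (mem_range.mp hi))]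
  calc x ^ i * y ^ (n - i) = x ^ i * y ^ (n - i) * (x * y) ^ i := by rw [hxy, one_pow, mul_one]
    _ = _ := by ring

theorem Polynomial.Chebyshev.S_eval_add_of_mul_eq_one {x y : R} (hxy : x * y = 1) (n : ℕ) :
    (S R n).eval (x + y) = ∑ i ∈ range (n + 1), x ^ i * y ^ (n - i) := by
  induction n using Nat.twoStepInduction with
  | zero => simp
  | one => simp [sum_range_succ, add_comm]
  | more n ih1 ih2 =>
    push_cast at ih2 ⊢
    rw [S_add_two, eval_sub, eval_mul, eval_X, ih1, ih2, geom_sum₂_add_two, hxy, one_mul]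

theorem Polynomial.Chebyshev.S_eval_add_sq_of_mul_eq_one {x y : R} (hxy : x * y = 1) (n : ℕ) :
    (S R n).eval (x + y) ^ 2 =
      (∑ i ∈ range (n + 1), (x ^ 2) ^ i) * ∑ i ∈ range (n + 1), (y ^ 2) ^ i := by
  have hx := geom_sum₂_eq_pow_mul_geom_sum_sq hxy n
  have hy := geom_sum₂_eq_pow_mul_geom_sum_sq (mul_comm x y ▸ hxy) n
  have hcomm := geom_sum₂_comm x y (n + 1)
  simp only [Nat.add_sub_cancel] at hcomm
  rw [S_eval_add_of_mul_eq_one hxy, sq]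
  nth_rw 2 [hcomm]
  rw [hx, hy, mul_mul_mul_comm, ← mul_pow, mul_comm y x, hxy, one_pow, one_mul]

end

namespace Matrix

variable {R : Type*} [CommRing R]

/-- The matrix of `g ↦ V * g * adjugate V` on trace-zero matrices `[[q, p], [r, -q]]` in the
coordinates `(p, q, r)`. Using the adjugate rather than `V⁻¹` makes `adM` multiplicative for every
`V`; for `det V = 1` it is the adjoint action. -/
def adM (V : Matrix (Fin 2) (Fin 2) R) : Matrix (Fin 3) (Fin 3) R :=
  !![V 0 0 ^ 2, -2 * (V 0 0 * V 0 1), -V 0 1 ^ 2;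
     -(V 0 0 * V 1 0), V 0 0 * V 1 1 + V 0 1 * V 1 0, V 0 1 * V 1 1;
     -V 1 0 ^ 2, 2 * (V 1 0 * V 1 1), V 1 1 ^ 2]

theorem adM_one : adM (1 : Matrix (Fin 2) (Fin 2) R) = 1 := by
  ext i j; fin_cases i <;> fin_cases j <;> simp [adM]

theorem adM_mul (A B : Matrix (Fin 2) (Fin 2) R) : adM (A * B) = adM A * adM B := by
  ext i j; fin_cases i <;> fin_cases j <;> simp [adM, mul_apply, Fin.sum_univ_succ] <;> ring

def adMHom : Matrix (Fin 2) (Fin 2) R →* Matrix (Fin 3) (Fin 3) R where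
  toFun := adM
  map_one' := adM_one
  map_mul' := adM_mul

theorem adM_pow (V : Matrix (Fin 2) (Fin 2) R) (i : ℕ) : adM V ^ i = adM (V ^ i) :=
  (map_pow adMHom V i).symm

theorem det_sum_pow_conj {n : Type*} [Fintype n] [DecidableEq n] {P Q : Matrix n n R}
    (hPQ : P * Q = 1) (hQP : Q * P = 1) (A : Matrix n n R) (s : Finset ℕ) :
    (∑ i ∈ s, (P * A * Q) ^ i).det = (∑ i ∈ s, A ^ i).det := by
  have hpow (i : ℕ) : (P * A * Q) ^ i = P * A ^ i * Q := by
    induction i with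
    | zero => rw [pow_zero, pow_zero, Matrix.mul_one, hPQ]
    | succ i ih =>
      rw [pow_succ, ih, pow_succ]
      simp only [Matrix.mul_assoc]
      rw [← Matrix.mul_assoc Q P, hQP, Matrix.one_mul]
  simp_rw [hpow, ← Finset.sum_mul, ← Finset.mul_sum]
  exact det_conj_of_mul_eq_one hPQ hQP

theorem det_sum_adM_pow_conj {P Q : Matrix (Fin 2) (Fin 2) R} (hPQ : P * Q = 1)
    (hQP : Q * P = 1) (T : Matrix (Fin 2) (Fin 2) R) (s : Finset ℕ) :
    (∑ i ∈ s, adM (P * T * Q) ^ i).det = (∑ i ∈ s, adM T ^ i).det := by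
  rw [adM_mul, adM_mul]
  refine det_sum_pow_conj ?_ ?_ _ s
  · rw [← adM_mul, hPQ, adM_one]
  · rw [← adM_mul, hQP, adM_one]

theorem pow_apply_of_upper_fin_two {T : Matrix (Fin 2) (Fin 2) R} (hT : T 1 0 = 0) (i : ℕ) :
    (T ^ i) 0 0 = T 0 0 ^ i ∧ (T ^ i) 1 0 = 0 ∧ (T ^ i) 1 1 = T 1 1 ^ i := by
  induction i with
  | zero => simp
  | succ i ih =>
    obtain ⟨h00, h10, h11⟩ := ih
    simp [pow_succ, mul_apply, Fin.sum_univ_two, h00, h10, h11, hT]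

theorem det_sum_adM_pow_of_upper {T : Matrix (Fin 2) (Fin 2) R} (hT : T 1 0 = 0) (s : Finset ℕ) :
    (∑ i ∈ s, adM T ^ i).det = (∑ i ∈ s, (T 0 0 ^ 2) ^ i) * (∑ i ∈ s, (T 0 0 * T 1 1) ^ i) *
      ∑ i ∈ s, (T 1 1 ^ 2) ^ i := by
  have hpow := pow_apply_of_upper_fin_two hT
  simp_rw [adM_pow]
  rw [det_fin_three]
  simp [adM, sum_apply, hpow, ← pow_mul, mul_comm _ 2, mul_pow]

theorem exists_upperTriangular_conj_fin_two {K : Type*} [Field K] [IsAlgClosed K]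
    (V : Matrix (Fin 2) (Fin 2) K) :
    ∃ P Q T : Matrix (Fin 2) (Fin 2) K, P * Q = 1 ∧ Q * P = 1 ∧ T 1 0 = 0 ∧ V = P * T * Q := by
  obtain ⟨μ, hμ⟩ := IsAlgClosed.exists_root V.charpoly (by simp [charpoly_degree_eq_dim])
  have hμ' : (μ - V 0 0) * (μ - V 1 1) = V 0 1 * V 1 0 := by
    simp only [IsRoot.def, charpoly_fin_two, trace_fin_two, det_fin_two, eval_add, eval_sub,
      eval_mul, eval_pow, eval_X, eval_C] at hμ
    linear_combination hμ
  by_cases hg : V 1 0 = 0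
  · exact ⟨1, 1, V, by simp, by simp, hg, by simp⟩
  set P : Matrix (Fin 2) (Fin 2) K := !![μ - V 1 1, 1; V 1 0, 0]
  set Q : Matrix (Fin 2) (Fin 2) K := !![0, (V 1 0)⁻¹; 1, -(μ - V 1 1) / V 1 0]
  have hQP : Q * P = 1 := by
    ext i j; fin_cases i <;> fin_cases j <;> simp [P, Q, mul_apply, hg]
  have hPQ : P * Q = 1 := mul_eq_one_comm.mp hQP
  refine ⟨P, Q, Q * V * P, hPQ, hQP, ?_, ?_⟩
  · simp only [P, Q, mul_apply, of_apply, cons_val', cons_val_zero, cons_val_one, cons_val_fin_one,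
      Fin.sum_univ_two, one_mul]
    field_simp
    linear_combination -hμ'
  · simp only [Matrix.mul_assoc, hPQ, Matrix.mul_one, ← Matrix.mul_assoc P Q, Matrix.one_mul]

end Matrix

open Matrix in
/-- For `V = [[e,f],[g,h]]` with `eh - fg = 1`, `v = tr V = e + h`, and every `l : ℕ`,
`det (Σ_{i=0}^l AdM(V)^i) = (l+1)·S_l(v)²`. -/
theorem det_geom_sum_adM (e f g h : ℂ) (hdet : e * h - f * g = 1) (l : ℕ) :
    (∑ i ∈ Finset.range (l + 1),
        (!![e^2, -2*(e*f), -f^2;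
            -(e*g), e*h + f*g, f*h;
            -g^2, 2*(g*h), h^2]) ^ i).det
      = ((l : ℂ) + 1) * ((chebS ℂ l).eval (e + h)) ^ 2 := by
  obtain ⟨P, Q, T, hPQ, hQP, hT, hV⟩ := exists_upperTriangular_conj_fin_two !![e, f; g, h]
  have hdetT : T 0 0 * T 1 1 = 1 := by
    have := congrArg det hV
    rw [det_conj_of_mul_eq_one hPQ hQP, det_fin_two_of, det_fin_two, hT, mul_zero, sub_zero] at this
    linear_combination hdet - this
  have htrT : T 0 0 + T 1 1 = e + h := by
    have := congrArg trace hV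
    rw [trace_mul_cycle, hQP, Matrix.one_mul, trace_fin_two_of, trace_fin_two] at this
    exact this.symm
  change (∑ i ∈ range (l + 1), adM !![e, f; g, h] ^ i).det = _
  rw [hV, det_sum_adM_pow_conj hPQ hQP, det_sum_adM_pow_of_upper hT, chebS_eq_chebyshev_S, ← htrT,
    Chebyshev.S_eval_add_sq_of_mul_eq_one hdetT, hdetT]
  simp only [one_pow, sum_const, card_range, nsmul_eq_mul, mul_one]
  push_cast
  ring
end

section
/- Let M ∈ ℂ with M ≠ 0 and y ∈ ℂ, and set P = [[M, 1], [0, M⁻¹]] and Q = [[M, 0], [2−y, M⁻¹]]. Then for every integer m, (QP⁻¹)^m (Q⁻¹P)^m = I − S_m(y)S_{m−1}(y)·[[y−2, M−M⁻¹], [(M−M⁻¹)(2−y), 2−y]] + S_{m−1}(y)²·[[(y−2)(y−M²), −(M⁻¹y − M − M⁻¹)], [(y−2)(M⁻¹y − M − M⁻¹), M⁻²(2−y)]]. -/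
/-!
Both `QP⁻¹` and `Q⁻¹P` have determinant `1` and trace `y`, so by Cayley–Hamilton every integer
power of such a matrix `C` is `S_{n-1}(y) C - S_{n-2}(y) I`. Multiplying the two expressions for
`n = m` and eliminating `S_{m-2} = y S_{m-1} - S_m`, the entries reduce to the claimed ones modulo the
Cassini-type identity `S_{m-1}² + S_m² - y S_{m-1} S_m = 1`. The polynomials `chebS` are Mathlib's
`Polynomial.Chebyshev.S`.
-/

open Polynomial

open Polynomial.Chebyshev

theorem chebS_eq_S (R : Type*) [CommRing R] : chebS R = S R := by
  delta chebS S
  rfl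

namespace Matrix

theorem inv_eq_adjugate_of_det_eq_one {n R : Type*} [Fintype n] [DecidableEq n] [CommRing R]
    {A : Matrix n n R} (hA : A.det = 1) : A⁻¹ = A.adjugate := by
  rw [inv_def, hA, Ring.inverse_one, one_smul]

variable {R : Type*} [CommRing R]

theorem adjugate_fin_two_eq_trace_smul_sub (C : Matrix (Fin 2) (Fin 2) R) :
    C.adjugate = C.trace • 1 - C := by
  rw [adjugate_fin_two, trace_fin_two, eta_fin_two C]
  ext i j
  fin_cases i <;> fin_cases j <;> simp

variable {C : Matrix (Fin 2) (Fin 2) R}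

theorem inv_eq_trace_smul_sub_of_det_eq_one (hC : C.det = 1) : C⁻¹ = C.trace • 1 - C := by
  rw [inv_eq_adjugate_of_det_eq_one hC, adjugate_fin_two_eq_trace_smul_sub]

theorem mul_self_eq_trace_smul_sub_one_of_det_eq_one (hC : C.det = 1) :
    C * C = C.trace • C - 1 := by
  have h := mul_adjugate C
  rw [hC, one_smul, adjugate_fin_two_eq_trace_smul_sub, mul_sub, mul_smul_comm, mul_one] at h
  rw [← h]
  abel

theorem zpow_eq_S_smul_sub_of_det_eq_one (hC : C.det = 1) (n : ℤ) :
    C ^ n = (S R (n - 1)).eval C.trace • C - (S R (n - 2)).eval C.trace • 1 := by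
  have hdet : IsUnit C.det := hC ▸ isUnit_one
  induction n using Int.induction_on with
  | zero => simp
  | succ n ih =>
    rw [zpow_add_one hdet, ih, sub_mul, smul_mul_assoc, smul_mul_assoc, one_mul,
      mul_self_eq_trace_smul_sub_one_of_det_eq_one hC, show (n : ℤ) + 1 - 1 = n by ring,
      show (n : ℤ) + 1 - 2 = n - 1 by ring, S_eq R n]
    simp only [eval_sub, eval_mul, eval_X]
    module
  | pred n ih =>
    rw [zpow_sub_one hdet, ih, inv_eq_trace_smul_sub_of_det_eq_one hC]
    simp only [sub_mul, mul_sub, smul_mul_assoc, mul_smul_comm, mul_one, one_mul]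
    rw [mul_self_eq_trace_smul_sub_one_of_det_eq_one hC, show -(n : ℤ) - 1 - 1 = -n - 2 by ring,
      show -(n : ℤ) - 1 - 2 = -n - 2 - 1 by ring, S_sub_one R (-n - 2)]
    simp only [eval_sub, eval_mul, eval_X, show -(n : ℤ) - 2 + 1 = -n - 1 by ring]
    module

end Matrix

open Matrix

section DoubleTwist

-- `P = !![M, 1; 0, M⁻¹]` and `Q = !![M, 0; 2 - y, M⁻¹]`.

variable {K : Type*} [Field K] {M : K}

theorem Q_mul_inv_P (hM : M ≠ 0) (y : K) :
    !![M, 0; 2 - y, M⁻¹] * (!![M, 1; 0, M⁻¹])⁻¹ = !![1, -M; (2 - y) * M⁻¹, y - 1] := by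
  rw [inv_eq_adjugate_of_det_eq_one (by simp [hM]), adjugate_fin_two_of, mul_fin_two]
  field_simp
  ring_nf

theorem inv_Q_mul_P (hM : M ≠ 0) (y : K) :
    (!![M, 0; 2 - y, M⁻¹])⁻¹ * !![M, 1; 0, M⁻¹] = !![1, M⁻¹; (y - 2) * M, y - 1] := by
  rw [inv_eq_adjugate_of_det_eq_one (by simp [hM]), adjugate_fin_two_of, mul_fin_two]
  field_simp
  ring_nf

theorem det_Q_mul_inv_P (hM : M ≠ 0) (y : K) : (!![1, -M; (2 - y) * M⁻¹, y - 1]).det = 1 := by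
  rw [det_fin_two_of]
  field_simp
  ring

theorem det_inv_Q_mul_P (hM : M ≠ 0) (y : K) : (!![1, M⁻¹; (y - 2) * M, y - 1]).det = 1 := by
  rw [det_fin_two_of]
  field_simp
  ring

theorem even_word_expansion_of_cassini (hM : M ≠ 0) {y s u : K}
    (h : u ^ 2 + s ^ 2 - y * u * s = 1) :
    (u • !![1, -M; (2 - y) * M⁻¹, y - 1] - (y * u - s) • 1)
      * (u • !![1, M⁻¹; (y - 2) * M, y - 1] - (y * u - s) • 1)
    = 1 - (s * u) • !![y - 2, M - M⁻¹; (M - M⁻¹) * (2 - y), 2 - y]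
        + u ^ 2 • !![(y - 2) * (y - M^2), -(M⁻¹ * y - M - M⁻¹);
               (y - 2) * (M⁻¹ * y - M - M⁻¹), M⁻¹^2 * (2 - y)] := by
  simp only [one_fin_two, smul_of, smul_cons, smul_eq_mul, smul_empty, of_sub_of, of_add_of,
    cons_sub_cons, cons_add_cons, empty_sub_empty, empty_add_empty, mul_fin_two]
  ext i j
  fin_cases i <;> fin_cases j <;>
    simp only [of_apply, cons_val_zero, cons_val_one, cons_val_fin_one, Fin.zero_eta, Fin.mk_one] <;>
    field_simp
  · linear_combination h
  · ring
  · ring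
  · linear_combination M ^ 2 * h

end DoubleTwist

/-- For `P = [[M,1],[0,M⁻¹]]`, `Q = [[M,0],[2-y,M⁻¹]]` and every integer `m`, the matrix
`(QP⁻¹)^m (Q⁻¹P)^m` has the stated closed form in terms of `S_m(y)` and `S_{m-1}(y)`. -/
theorem even_word_formula (M y : ℂ) (hM : M ≠ 0) (m : ℤ) :
    (!![M, 0; 2 - y, M⁻¹] * (!![M, 1; 0, M⁻¹])⁻¹) ^ m
      * ((!![M, 0; 2 - y, M⁻¹])⁻¹ * !![M, 1; 0, M⁻¹]) ^ m
    = 1 - ((chebS ℂ m).eval y * (chebS ℂ (m - 1)).eval y) •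
            !![y - 2, M - M⁻¹; (M - M⁻¹) * (2 - y), 2 - y]
        + ((chebS ℂ (m - 1)).eval y) ^ 2 •
            !![(y - 2) * (y - M^2), -(M⁻¹ * y - M - M⁻¹);
               (y - 2) * (M⁻¹ * y - M - M⁻¹), M⁻¹^2 * (2 - y)] := by
  have hS := congrArg (eval y) (S_sq_add_S_sq ℂ (m - 1))
  rw [sub_add_cancel] at hS
  simp only [eval_sub, eval_add, eval_mul, eval_pow, eval_X, eval_one] at hS
  rw [Q_mul_inv_P hM, inv_Q_mul_P hM, zpow_eq_S_smul_sub_of_det_eq_one (det_Q_mul_inv_P hM y),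
    zpow_eq_S_smul_sub_of_det_eq_one (det_inv_Q_mul_P hM y), trace_fin_two_of, trace_fin_two_of,
    add_sub_cancel, chebS_eq_S, S_sub_two, eval_sub, eval_mul, eval_X]
  exact even_word_expansion_of_cassini hM hS
end

section
/- Let M ∈ ℂ with M ≠ 0 and y ∈ ℂ, set P = [[M, 1], [0, M⁻¹]], Q = [[M, 0], [2−y, M⁻¹]], and x = M + M⁻¹. Then for every integer m, the trace of (QP⁻¹)^m (QP) (Q⁻¹P)^m equals 2 − (y+2−x²)·(S_m(y) − S_{m−1}(y))². -/
open Polynomial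

/-! `A = QP⁻¹` and `B = Q⁻¹P` both have determinant `1` and trace `y`, so by Cayley–Hamilton
`A² = yA - 1` and hence `A^m = S_{m-1}(y) A - S_{m-2}(y)` for every integer `m`, and likewise
for `B`. Substituting these into the word leaves a quadratic form in `S_{m-1}(y)` and `S_m(y)`,
which agrees with the claimed expression modulo `S_{m-1}² + S_m² - y S_{m-1} S_m = 1`. -/

section Chebyshev

variable (R : Type*) [CommRing R]

theorem chebS_add_two (n : ℤ) : chebS R (n + 2) = X * chebS R (n + 1) - chebS R n := by
  obtain ⟨k⟩ | ⟨k⟩ := n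
  · exact chebS.eq_3 R k
  · linear_combination (norm := (simp [Int.negSucc_eq]; ring_nf)) chebS.eq_4 R k

theorem chebS_eq_S_s14 : chebS R = Chebyshev.S R := by
  suffices h : ∀ n : ℤ, chebS R n = Chebyshev.S R n ∧ chebS R (n + 1) = Chebyshev.S R (n + 1) from
    funext fun n ↦ (h n).1
  intro n
  induction n using Int.induction_on with
  | zero => simp [chebS]
  | succ k ih =>
    refine ⟨ih.2, ?_⟩
    rw [add_assoc, one_add_one_eq_two, chebS_add_two, Chebyshev.S_add_two, ih.1, ih.2]
  | pred k ih =>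
    refine ⟨?_, by rw [sub_add_cancel, ih.1]⟩
    have h := chebS_add_two R (-k - 1)
    rw [show -(k : ℤ) - 1 + 2 = -k + 1 by ring, sub_add_cancel, ih.1, ih.2] at h
    rw [Chebyshev.S_sub_one, h]
    ring

end Chebyshev

namespace Matrix

variable {R : Type*} [CommRing R]

theorem mul_self_fin_two (A : Matrix (Fin 2) (Fin 2) R) : A * A = A.trace • A - A.det • 1 := by
  rw [eta_fin_two A, mul_fin_two, trace_fin_two_of, det_fin_two_of, one_fin_two]
  ext i j
  fin_cases i <;> fin_cases j <;> simp <;> ring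

theorem inv_fin_two_of_det_eq_one {a b c d : R} (h : a * d - b * c = 1) :
    (!![a, b; c, d])⁻¹ = !![d, -b; -c, a] := by
  rw [inv_def, det_fin_two_of, h, Ring.inverse_one, one_smul, adjugate_fin_two_of]

theorem zpow_eq_of_mul_self_eq_smul_sub_one {n : Type*} [Fintype n] [DecidableEq n]
    {A : Matrix n n R} {t : R} (hA : A * A = t • A - 1) (m : ℤ) :
    A ^ m = (Chebyshev.S R (m - 1)).eval t • A - (Chebyshev.S R (m - 2)).eval t • 1 := by
  have hright : A * (t • 1 - A) = 1 := by rw [mul_sub, mul_smul_comm, mul_one, hA]; abel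
  have hdet : IsUnit A.det := isUnit_det_of_right_inverse hright
  induction m using Int.induction_on with
  | zero => simp
  | succ k ih =>
    rw [zpow_add_one hdet, ih, sub_mul, smul_mul_assoc, smul_mul_assoc, hA, one_mul,
      add_sub_cancel_right, show (k : ℤ) + 1 - 2 = k - 1 by ring, Chebyshev.S_eq R k]
    simp only [eval_sub, eval_mul, eval_X]
    module
  | pred k ih =>
    rw [zpow_sub_one hdet, ih, inv_eq_right_inv hright]
    simp only [sub_mul, mul_sub, smul_mul_assoc, mul_smul_comm, one_mul, mul_one, hA]
    rw [show -(k : ℤ) - 1 - 1 = -k - 2 by ring, show -(k : ℤ) - 1 - 2 = -k - 2 - 1 by ring,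
      Chebyshev.S_sub_one R (-k - 2), show -(k : ℤ) - 2 + 1 = -k - 1 by ring]
    simp only [eval_sub, eval_mul, eval_X]
    module

theorem zpow_fin_two_of_det_eq_one {A : Matrix (Fin 2) (Fin 2) R} {t : R} (ht : A.trace = t)
    (hA : A.det = 1) (m : ℤ) :
    A ^ m = (Chebyshev.S R (m - 1)).eval t • A - (Chebyshev.S R (m - 2)).eval t • 1 :=
  zpow_eq_of_mul_self_eq_smul_sub_one (by rw [mul_self_fin_two, ht, hA, one_smul]) m

end Matrix

/-- For `P = [[M,1],[0,M⁻¹]]`, `Q = [[M,0],[2-y,M⁻¹]]`, `x = M + M⁻¹` and every integer `m`,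
`tr ((QP⁻¹)^m (QP) (Q⁻¹P)^m) = 2 - (y+2-x²)·(S_m(y) - S_{m-1}(y))²`. -/
theorem odd_word_trace (M y : ℂ) (hM : M ≠ 0) (m : ℤ) :
    Matrix.trace ((!![M, 0; 2 - y, M⁻¹] * (!![M, 1; 0, M⁻¹])⁻¹) ^ m
        * (!![M, 0; 2 - y, M⁻¹] * !![M, 1; 0, M⁻¹])
        * ((!![M, 0; 2 - y, M⁻¹])⁻¹ * !![M, 1; 0, M⁻¹]) ^ m)
      = 2 - (y + 2 - (M + M⁻¹)^2)
            * ((chebS ℂ m).eval y - (chebS ℂ (m - 1)).eval y) ^ 2 := by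
  rw [Matrix.inv_fin_two_of_det_eq_one (by simp [hM]),
    Matrix.inv_fin_two_of_det_eq_one (by simp [hM])]
  simp only [Matrix.mul_fin_two]
  rw [Matrix.zpow_fin_two_of_det_eq_one (t := y) (by rw [Matrix.trace_fin_two_of]; field_simp; ring)
      (by rw [Matrix.det_fin_two_of]; field_simp; ring),
    Matrix.zpow_fin_two_of_det_eq_one (t := y) (by rw [Matrix.trace_fin_two_of]; field_simp; ring)
      (by rw [Matrix.det_fin_two_of]; field_simp; ring),
    chebS_eq_S_s14, Chebyshev.S_sub_two]
  have pell := congrArg (eval y) (Chebyshev.S_sq_add_S_sq ℂ (m - 1))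
  simp only [sub_add_cancel, eval_sub, eval_add, eval_mul, eval_pow, eval_X, eval_one] at pell
  simp only [Matrix.one_fin_two, Matrix.smul_of, Matrix.smul_cons, Matrix.smul_empty, smul_eq_mul,
    Matrix.of_sub_of, Matrix.cons_sub_cons, Matrix.empty_sub_empty, Matrix.mul_fin_two,
    Matrix.trace_fin_two_of, eval_sub, eval_mul, eval_X]
  field_simp
  -- after clearing denominators, LHS - RHS = `2 M² (S_{m-1}² + S_m² - y S_{m-1} S_m - 1)`
  linear_combination 2 * M ^ 2 * pell
end

section
/- Let m ≥ 1 and n ≠ 0 be integers, let x ∈ ℂ with x² = 4, and let y ∈ ℂ. Define z = 2 − (y−2)·(S_m(y) − S_{m−1}(y))² and t = 1 + (y−2)·S_{m−1}(y)·(S_m(y) − S_{m−1}(y)). If t·S_{n−1}(z) − S_{n−2}(z) = 0, then S_m(y) ≠ 0 and S_{m−1}(y) ≠ 0. -/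
open Polynomial

/-!
If `S_m(y) S_{m-1}(y) = 0`, the identity `S_m² + S_{m-1}² - y S_m S_{m-1} = 1` forces `z = 4 - y`,
and the Riley relation collapses to `S_k(z) = S_{k-1}(z)` with `k = n` or `k = n - 1`.
Writing a point as `2 cos θ`, the identity `S_l(2 cos θ) sin θ = sin((l + 1) θ)` shows that both a
root of `S_l` (`l ≠ -1`) and a solution of `S_k(z) = S_{k-1}(z)` are `2 cos θ` with `θ` real.
Then `y + z = 4` forces `y = 2`, which is no root since `S_l(2) = l + 1`.
-/

open Polynomial.Chebyshev

theorem sq_eval_S_sub_eval_S_sub_one {R : Type*} [CommRing R] (m : ℤ) (y : R) :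
    ((S R m).eval y - (S R (m - 1)).eval y) ^ 2
      = 1 + (y - 2) * (S R m).eval y * (S R (m - 1)).eval y := by
  have h := congrArg (eval y) (S_sq_add_S_sq R (m - 1))
  simp only [eval_sub, eval_add, eval_mul, eval_pow, eval_X, eval_one, sub_add_cancel] at h
  linear_combination h

section

open Complex

theorem exists_real_of_eval_S_eq_zero {l : ℤ} (hl : l ≠ -1) {y : ℂ} (hy : (S ℂ l).eval y = 0) :
    ∃ θ : ℝ, y = 2 * Real.cos θ := by
  obtain ⟨θ, hθ⟩ := cos_surjective (y / 2)
  obtain rfl : y = 2 * cos θ := by rw [hθ]; ring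
  have hsin : sin ((l + 1) * θ) = 0 := by rw [← S_two_mul_complex_cos, hy, zero_mul]
  obtain ⟨k, hk⟩ := sin_eq_zero_iff.1 hsin
  have hl' : (l : ℂ) + 1 ≠ 0 := by exact_mod_cast (show l + 1 ≠ 0 by omega)
  refine ⟨k * Real.pi / (l + 1), ?_⟩
  push_cast
  rw [← hk]; field_simp

theorem exists_real_of_eval_S_eq_eval_S_sub_one {k : ℤ} {z : ℂ}
    (hz : (S ℂ k).eval z = (S ℂ (k - 1)).eval z) : ∃ θ : ℝ, z = 2 * Real.cos θ := by
  obtain ⟨θ, hθ⟩ := cos_surjective (z / 2)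
  obtain rfl : z = 2 * cos θ := by rw [hθ]; ring
  have hsin : sin (k * θ) = sin ((k + 1) * θ) := by
    have := S_two_mul_complex_cos θ (k - 1)
    rw [← S_two_mul_complex_cos, hz, this]; push_cast; ring_nf
  obtain ⟨j, hj | hj⟩ := sin_eq_sin_iff.1 hsin
  · refine ⟨2 * j * Real.pi, ?_⟩
    obtain rfl : θ = 2 * j * Real.pi := by linear_combination hj
    push_cast; rfl
  · have hk : 2 * (k : ℂ) + 1 ≠ 0 := by exact_mod_cast (show 2 * k + 1 ≠ 0 by omega)
    refine ⟨(2 * j + 1) * Real.pi / (2 * k + 1), ?_⟩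
    obtain rfl : θ = (2 * j + 1) * Real.pi / (2 * k + 1) := by
      field_simp; linear_combination hj
    push_cast; rfl

end

theorem eval_S_ne_zero_of_eval_S_four_sub {l k : ℤ} (hl : l ≠ -1) {y : ℂ}
    (h : (S ℂ k).eval (4 - y) = (S ℂ (k - 1)).eval (4 - y)) : (S ℂ l).eval y ≠ 0 := by
  intro hy
  obtain ⟨a, rfl⟩ := exists_real_of_eval_S_eq_zero hl hy
  obtain ⟨b, hb⟩ := exists_real_of_eval_S_eq_eval_S_sub_one h
  have hab : Real.cos a + Real.cos b = 2 := Complex.ofReal_injective <| by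
    simp only [Complex.ofReal_add, Complex.ofReal_ofNat]; linear_combination -hb / 2
  have ha : Real.cos a = 1 := by linarith [Real.cos_le_one a, Real.cos_le_one b]
  rw [ha, Complex.ofReal_one, mul_one, S_eval_two] at hy
  exact hl (by exact_mod_cast eq_neg_of_add_eq_zero_left hy)

theorem odd_Riley_nonvanishing_general (m n : ℤ) (hm : 1 ≤ m)
    (y z t : ℂ)
    (hz : z = 2 - (y - 2) * ((chebS ℂ m).eval y - (chebS ℂ (m - 1)).eval y) ^ 2)
    (ht : t = 1 + (y - 2) * (chebS ℂ (m - 1)).eval y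
            * ((chebS ℂ m).eval y - (chebS ℂ (m - 1)).eval y))
    (hR : t * (chebS ℂ (n - 1)).eval z - (chebS ℂ (n - 2)).eval z = 0) :
    (chebS ℂ m).eval y ≠ 0 ∧ (chebS ℂ (m - 1)).eval y ≠ 0 := by
  rw [chebS_eq_S] at *
  have hsq := sq_eval_S_sub_eval_S_sub_one m y
  have hrec : (S ℂ n).eval z = z * (S ℂ (n - 1)).eval z - (S ℂ (n - 2)).eval z := by
    simp only [S_eq ℂ n, eval_sub, eval_mul, eval_X]
  constructor
  · intro hs
    have hz4 : z = 4 - y := by rw [hz, hsq, hs]; ring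
    have ht' : t = z - 1 := by
      rw [hs] at ht hsq
      rw [ht, hz4]; linear_combination (2 - y) * hsq
    refine eval_S_ne_zero_of_eval_S_four_sub (k := n) (by omega) ?_ hs
    rw [← hz4]
    linear_combination hrec + hR - (S ℂ (n - 1)).eval z * ht'
  · intro hs
    have hz4 : z = 4 - y := by rw [hz, hsq, hs]; ring
    refine eval_S_ne_zero_of_eval_S_four_sub (k := n - 1) (by omega) ?_ hs
    rw [← hz4, show n - 1 - 1 = n - 2 by ring]
    rw [hs] at ht
    linear_combination hR - (S ℂ (n - 1)).eval z * ht

/-- If the Riley polynomial `t·S_{n-1}(z) - S_{n-2}(z)` of the odd double twist knot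
`J(2m+1, 2n)` at parabolic meridional trace (`x² = 4`) vanishes, then `S_m(y) ≠ 0` and
`S_{m-1}(y) ≠ 0`. -/
theorem odd_Riley_nonvanishing (m n : ℤ) (hm : 1 ≤ m) (hn : n ≠ 0) (x : ℂ) (hx : x^2 = 4)
    (y z t : ℂ)
    (hz : z = 2 - (y - 2) * ((chebS ℂ m).eval y - (chebS ℂ (m - 1)).eval y) ^ 2)
    (ht : t = 1 + (y - 2) * (chebS ℂ (m - 1)).eval y
            * ((chebS ℂ m).eval y - (chebS ℂ (m - 1)).eval y))
    (hR : t * (chebS ℂ (n - 1)).eval z - (chebS ℂ (n - 2)).eval z = 0) :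
    (chebS ℂ m).eval y ≠ 0 ∧ (chebS ℂ (m - 1)).eval y ≠ 0 :=
  odd_Riley_nonvanishing_general m n hm y z t hz ht hR
end

section
/- Let m ≥ 1 and n ≥ 1 be integers with m·n ≥ 2, and let y ∈ ℂ be an algebraic integer. Set z = 2 + (y−2)²·S_{m−1}(y)². Then m·n·S_{m−1}(y)²·S_{n−1}(z)² is neither 1 nor −1. -/
/-!
Since `S_l` has integer coefficients, `a = S_{m-1}(y)`, `z` and `S_{n-1}(z)` are algebraic
integers, hence so is `c = ±a²·S_{n-1}(z)²`. If `m·n·c = 1`, then `c = 1/(mn)` is a rational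
algebraic integer, i.e. an integer, so `mn` is a unit of `ℤ`, contradicting `mn ≥ 2`.
-/

open Polynomial

theorem isIntegral_eval_chebS {R A : Type*} [CommRing R] [CommRing A] [Algebra R A] {x : A}
    (hx : IsIntegral R x) (l : ℤ) : IsIntegral R ((chebS A l).eval x) := by
  induction l using chebS.induct with
  | case1 => simpa [chebS] using isIntegral_one
  | case2 => simpa [chebS] using hx
  | case3 n ih1 ih2 => rw [chebS.eq_3]; simpa using (hx.mul ih1).sub ih2
  | case4 n ih1 ih2 => rw [chebS.eq_4]; simpa using (hx.mul ih1).sub ih2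

theorem isUnit_of_intCast_mul_eq_one {K : Type*} [Field K] [CharZero K] {N : ℤ} {c : K}
    (hc : IsIntegral ℤ c) (h : (N : K) * c = 1) : IsUnit N := by
  have hc_rat : c = algebraMap ℚ K (N : ℚ)⁻¹ := by
    rw [map_inv₀, map_intCast]; exact eq_inv_of_mul_eq_one_right h
  obtain ⟨k, hk⟩ := IsIntegrallyClosed.isIntegral_iff.mp
    ((isIntegral_algebraMap_iff (algebraMap ℚ K).injective).mp (hc_rat ▸ hc))
  have hck : c = k := by rw [hc_rat, ← hk]; simp
  exact IsUnit.of_mul_eq_one k (Int.cast_injective (α := K) (by push_cast; rw [← hck, h]))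

theorem leading_coeff_not_monic_general (m n : ℤ) (hmn : 2 ≤ m * n)
    (y : ℂ) (hy : IsIntegral ℤ y) (z : ℂ)
    (hz : z = 2 + (y - 2)^2 * ((chebS ℂ (m - 1)).eval y) ^ 2) :
    (m : ℂ) * n * ((chebS ℂ (m - 1)).eval y) ^ 2 * ((chebS ℂ (n - 1)).eval z) ^ 2 ≠ 1 ∧
    (m : ℂ) * n * ((chebS ℂ (m - 1)).eval y) ^ 2 * ((chebS ℂ (n - 1)).eval z) ^ 2 ≠ -1 := by
  set a := (chebS ℂ (m - 1)).eval y
  have ha : IsIntegral ℤ a := isIntegral_eval_chebS hy _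
  have h2 : IsIntegral ℤ (2 : ℂ) := map_ofNat (algebraMap ℤ ℂ) 2 ▸ isIntegral_algebraMap
  have hz_int : IsIntegral ℤ z := hz ▸ h2.add (((hy.sub h2).pow 2).mul (ha.pow 2))
  have hc : IsIntegral ℤ (a ^ 2 * ((chebS ℂ (n - 1)).eval z) ^ 2) :=
    (ha.pow 2).mul ((isIntegral_eval_chebS hz_int _).pow 2)
  have hmn_not_unit : ¬IsUnit (m * n) := by
    rw [Int.isUnit_iff]; omega
  refine ⟨fun h ↦ hmn_not_unit (isUnit_of_intCast_mul_eq_one hc ?_),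
    fun h ↦ hmn_not_unit (isUnit_of_intCast_mul_eq_one hc.neg ?_)⟩
  · push_cast; linear_combination h
  · push_cast; linear_combination -h

/-- For integers `m, n ≥ 1` with `mn ≥ 2` and an algebraic integer `y ∈ ℂ`, with
`z = 2 + (y-2)²·S_{m-1}(y)²`, the quantity `m·n·S_{m-1}(y)²·S_{n-1}(z)²` is neither `1`
nor `-1`. -/
theorem leading_coeff_not_monic (m n : ℤ) (hm : 1 ≤ m) (hn : 1 ≤ n) (hmn : 2 ≤ m * n)
    (y : ℂ) (hy : IsIntegral ℤ y) (z : ℂ)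
    (hz : z = 2 + (y - 2)^2 * ((chebS ℂ (m - 1)).eval y) ^ 2) :
    (m : ℂ) * n * ((chebS ℂ (m - 1)).eval y) ^ 2 * ((chebS ℂ (n - 1)).eval z) ^ 2 ≠ 1 ∧
    (m : ℂ) * n * ((chebS ℂ (m - 1)).eval y) ^ 2 * ((chebS ℂ (n - 1)).eval z) ^ 2 ≠ -1 :=
  leading_coeff_not_monic_general m n hmn y hy z hz
end
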